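/- Fix k ∈ ℕ, vectors a, b ∈ ℝ^k and scalars a₀, b₀ ∈ ℝ with b_i > 0 for every i and a₁/b₁ > a₂/b₂ > … > a_k/b_k; write θ₁(w) = a₀ + Σ_i a_i·w_i and θ₂(w) = b₀ + Σ_i b_i·w_i, and P_j := (a₀ + Σ_{i=1}^j a_i, b₀ + Σ_{i=1}^j b_i) for j = 0,…,k. Let g : ℝ → ℝ be convex, c ≥ 0, L ≤ U reals, let y* be a minimizer of y ↦ c·y + g(y) over ℝ, and set u*(x) := min(U, max(L, y* − x)). Then there exists j ∈ {0,…,k} such that for every w ∈ [0,1]^k: θ₁(w) + c·u*(θ₂(w)) + g( θ₂(w) + u*(θ₂(w)) ) ≤ (P_j)₁ + c·u*((P_j)₂) + g( (P_j)₂ + u*((P_j)₂) ); that is, the worst case of the one-step cost under the optimal (clamped) control law is attained at one of the right-side vertices P₀,…,P_k of the zonogon. -/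

import Mathlib

/-!
The clamped control `u*(x)` minimizes `c u + g (x + u)` over `[L, U]`, so the optimal one-step
cost `H x = c u*(x) + g (x + u*(x))` is a partial minimum of a jointly convex function, hence
convex. Since the slopes `a i / b i` are sorted, the zonogon lies below the line through two
consecutive right-side vertices `P j`, `P (j + 1)`; so for `θ₂` between their second coordinates
the objective `θ₁ + H θ₂` is bounded by an affine function plus `H`, which is convex and therefore
maximal at one of the two vertices.
-/

section ConvexControl

open Set

theorem ConvexOn.isMinOn_clamp {φ : ℝ → ℝ} (hφ : ConvexOn ℝ univ φ) {y : ℝ}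
    (hy : IsMinOn φ univ y) {l u : ℝ} (hlu : l ≤ u) :
    IsMinOn φ (Icc l u) (min u (max l y)) := by
  intro z hz
  rcases le_total y l with hyl | hly
  · rw [max_eq_left hyl, min_eq_right hlu]
    have hl : l ∈ segment ℝ y z := by
      rw [segment_eq_Icc (hyl.trans hz.1)]; exact ⟨hyl, hz.1⟩
    exact (hφ.le_on_segment trivial trivial hl).trans (max_le (hy trivial) le_rfl)
  rcases le_total u y with huy | hyu
  · rw [max_eq_right hly, min_eq_left huy]
    have hu : u ∈ segment ℝ z y := by
      rw [segment_eq_Icc (hz.2.trans huy)]; exact ⟨hz.2, huy⟩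
    exact (hφ.le_on_segment trivial trivial hu).trans (max_le le_rfl (hy trivial))
  · rw [max_eq_right hly, min_eq_right hyu]
    exact hy trivial

theorem isMinOn_clamped_control {g : ℝ → ℝ} (hg : ConvexOn ℝ univ g) {c L U ystar : ℝ}
    (hLU : L ≤ U) (hy : ∀ y, c * ystar + g ystar ≤ c * y + g y) (x : ℝ) :
    IsMinOn (fun u => c * u + g (x + u)) (Icc L U) (min U (max L (ystar - x))) := by
  have hφ : ConvexOn ℝ univ fun y => c * y + g y :=
    ((LinearMap.mul ℝ ℝ c).convexOn convex_univ).add hg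
  have hclamp := hφ.isMinOn_clamp (fun y _ => hy y) ((add_le_add_iff_left x).2 hLU)
  rw [← add_sub_cancel x ystar, max_add_add_left, min_add_add_left] at hclamp
  refine isMinOn_iff.2 fun u hu => ?_
  have := isMinOn_iff.1 hclamp (x + u)
    ⟨(add_le_add_iff_left x).2 hu.1, (add_le_add_iff_left x).2 hu.2⟩
  rw [mul_add, mul_add] at this
  linarith

theorem ConvexOn.comp_minimizer {E F : Type*} [AddCommGroup E] [Module ℝ E]
    [AddCommGroup F] [Module ℝ F] {K : Set F} {Φ : E × F → ℝ}
    (hΦ : ConvexOn ℝ (univ ×ˢ K) Φ) {v : E → F} (hvK : ∀ x, v x ∈ K)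
    (hv : ∀ x, IsMinOn (fun u => Φ (x, u)) K (v x)) :
    ConvexOn ℝ univ fun x => Φ (x, v x) := by
  refine ⟨convex_univ, fun x _ y _ a b ha hb hab => ?_⟩
  have hx : (x, v x) ∈ univ ×ˢ K := mk_mem_prod trivial (hvK x)
  have hy : (y, v y) ∈ univ ×ˢ K := mk_mem_prod trivial (hvK y)
  calc Φ (a • x + b • y, v (a • x + b • y))
      ≤ Φ (a • (x, v x) + b • (y, v y)) := hv _ (hΦ.1 hx hy ha hb hab).2
    _ ≤ a • Φ (x, v x) + b • Φ (y, v y) := hΦ.2 hx hy ha hb hab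

theorem convexOn_optimal_cost {g : ℝ → ℝ} (hg : ConvexOn ℝ univ g) {c L U ystar : ℝ}
    (hLU : L ≤ U) (hy : ∀ y, c * ystar + g ystar ≤ c * y + g y) :
    ConvexOn ℝ univ fun x =>
      c * min U (max L (ystar - x)) + g (x + min U (max L (ystar - x))) := by
  have hΦ : ConvexOn ℝ univ fun p : ℝ × ℝ => c * p.2 + g (p.1 + p.2) :=
    ((c • LinearMap.snd ℝ ℝ ℝ).convexOn convex_univ).add
      (hg.comp_linearMap (LinearMap.fst ℝ ℝ ℝ + LinearMap.snd ℝ ℝ ℝ))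
  exact (hΦ.subset (subset_univ _) (convex_univ.prod (convex_Icc L U))).comp_minimizer
    (fun _ => ⟨le_min hLU (le_max_left _ _), min_le_left _ _⟩)
    (isMinOn_clamped_control hg hLU hy)

end ConvexControl

open Finset

theorem Finset.sum_mul_le_sum_of_nonneg_of_nonpos {ι : Type*} [DecidableEq ι] {s t : Finset ι}
    (hts : t ⊆ s) {f w : ι → ℝ} (hw : ∀ i ∈ s, w i ∈ Set.Icc 0 1)
    (hft : ∀ i ∈ t, 0 ≤ f i) (hfs : ∀ i ∈ s \ t, f i ≤ 0) :
    ∑ i ∈ s, f i * w i ≤ ∑ i ∈ t, f i := by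
  rw [← sum_sdiff hts]
  have hout : ∑ i ∈ s \ t, f i * w i ≤ 0 := sum_nonpos fun i hi =>
    mul_nonpos_of_nonpos_of_nonneg (hfs i hi) (hw i (mem_sdiff.1 hi).1).1
  have hin : ∑ i ∈ t, f i * w i ≤ ∑ i ∈ t, f i := sum_le_sum fun i hi =>
    mul_le_of_le_one_right (hft i hi) (hw i (hts hi)).2
  linarith

theorem exists_consecutive_le_le {S : ℕ → ℝ} {x : ℝ} {k : ℕ} (hk : 0 < k) (h0 : S 0 ≤ x)
    (hxk : x ≤ S k) : ∃ j < k, S j ≤ x ∧ x ≤ S (j + 1) := by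
  induction k with
  | zero => exact absurd hk (lt_irrefl 0)
  | succ n ih =>
    by_cases hn : 0 < n ∧ x ≤ S n
    · obtain ⟨j, hjn, hj⟩ := ih hn.1 hn.2
      exact ⟨j, hjn.trans (lt_add_one n), hj⟩
    · refine ⟨n, lt_add_one n, ?_, hxk⟩
      rcases Nat.eq_zero_or_pos n with rfl | hn0
      · exact h0
      · exact le_of_not_ge fun h => hn ⟨hn0, h⟩

section Zonogon

variable {k : ℕ} {a b : ℕ → ℝ}

theorem zonogon_le_edge_line (hb : ∀ i, 1 ≤ i → i ≤ k → 0 < b i)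
    (hsort : ∀ i j, 1 ≤ i → i < j → j ≤ k → a j / b j < a i / b i) {w : ℕ → ℝ}
    (hw : ∀ i, 1 ≤ i → i ≤ k → w i ∈ Set.Icc (0 : ℝ) 1) {j : ℕ} (hjk : j < k) :
    ∑ i ∈ Icc 1 k, a i * w i - a (j + 1) / b (j + 1) * ∑ i ∈ Icc 1 k, b i * w i
      ≤ ∑ i ∈ Icc 1 j, a i - a (j + 1) / b (j + 1) * ∑ i ∈ Icc 1 j, b i := by
  set r := a (j + 1) / b (j + 1)
  have key := sum_mul_le_sum_of_nonneg_of_nonpos (f := fun i => a i - r * b i)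
    (Icc_subset_Icc_right hjk.le) (fun i hi => hw i (mem_Icc.1 hi).1 (mem_Icc.1 hi).2)
    (fun i hi => ?_) (fun i hi => ?_)
  · simpa only [sub_mul, mul_assoc, sum_sub_distrib, ← mul_sum] using key
  · obtain ⟨h1i, hij⟩ := mem_Icc.1 hi
    have := hsort i (j + 1) h1i (by omega) hjk
    linarith [(lt_div_iff₀ (hb i h1i (by omega))).1 this]
  · simp only [mem_sdiff, mem_Icc, not_and, not_le] at hi
    obtain ⟨⟨h1i, hik⟩, hij⟩ := hi
    have hslope : a i / b i ≤ r := by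
      rcases (Nat.succ_le_of_lt (hij h1i)).eq_or_lt with rfl | hlt
      · exact le_rfl
      · exact (hsort _ _ (by omega) hlt hik).le
    linarith [(div_le_iff₀ (hb i h1i hik)).1 hslope]

theorem exists_rightside_vertex_ge {H : ℝ → ℝ} (hH : ConvexOn ℝ Set.univ H)
    (hb : ∀ i, 1 ≤ i → i ≤ k → 0 < b i)
    (hsort : ∀ i j, 1 ≤ i → i < j → j ≤ k → a j / b j < a i / b i) (a0 b0 : ℝ) {w : ℕ → ℝ}
    (hw : ∀ i, 1 ≤ i → i ≤ k → w i ∈ Set.Icc (0 : ℝ) 1) :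
    ∃ j ≤ k, a0 + ∑ i ∈ Icc 1 k, a i * w i + H (b0 + ∑ i ∈ Icc 1 k, b i * w i)
      ≤ a0 + ∑ i ∈ Icc 1 j, a i + H (b0 + ∑ i ∈ Icc 1 j, b i) := by
  rcases Nat.eq_zero_or_pos k with rfl | hk
  · exact ⟨0, le_rfl, by simp⟩
  set x := b0 + ∑ i ∈ Icc 1 k, b i * w i
  have hbw : ∀ i ∈ Icc 1 k, 0 ≤ b i ∧ w i ∈ Set.Icc (0 : ℝ) 1 := fun i hi =>
    ⟨(hb i (mem_Icc.1 hi).1 (mem_Icc.1 hi).2).le, hw i (mem_Icc.1 hi).1 (mem_Icc.1 hi).2⟩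
  have hx0 : b0 + ∑ i ∈ Icc 1 0, b i ≤ x := by
    have : 0 ≤ ∑ i ∈ Icc 1 k, b i * w i :=
      sum_nonneg fun i hi => mul_nonneg (hbw i hi).1 (hbw i hi).2.1
    simpa [x] using this
  have hxk : x ≤ b0 + ∑ i ∈ Icc 1 k, b i := by
    have : ∑ i ∈ Icc 1 k, b i * w i ≤ ∑ i ∈ Icc 1 k, b i :=
      sum_le_sum fun i hi => mul_le_of_le_one_right (hbw i hi).1 (hbw i hi).2.2
    linarith
  obtain ⟨j, hjk, hSj, hSj1⟩ :=
    exists_consecutive_le_le (S := fun m => b0 + ∑ i ∈ Icc 1 m, b i) hk hx0 hxk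
  have hedge := zonogon_le_edge_line hb hsort hw hjk
  set r := a (j + 1) / b (j + 1)
  have hr : r * b (j + 1) = a (j + 1) := div_mul_cancel₀ _ (hb (j + 1) (by omega) hjk).ne'
  have hφ : ConvexOn ℝ Set.univ fun y => r * y + H y :=
    ((LinearMap.mul ℝ ℝ r).convexOn convex_univ).add hH
  have hseg : x ∈ segment ℝ (b0 + ∑ i ∈ Icc 1 j, b i) (b0 + ∑ i ∈ Icc 1 (j + 1), b i) := by
    rw [segment_eq_Icc (hSj.trans hSj1)]; exact ⟨hSj, hSj1⟩
  rcases le_max_iff.1 (hφ.le_on_segment trivial trivial hseg) with hφx | hφx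
  · exact ⟨j, hjk.le, by linarith⟩
  · refine ⟨j + 1, hjk, ?_⟩
    have hstepA := sum_Icc_succ_top (Nat.le_add_left 1 j) a
    have hstepB : r * (b0 + ∑ i ∈ Icc 1 (j + 1), b i)
        = r * (b0 + ∑ i ∈ Icc 1 j, b i) + a (j + 1) := by
      rw [sum_Icc_succ_top (Nat.le_add_left 1 j), ← hr]; ring
    linarith

theorem exists_rightside_vertex_forall_ge {H : ℝ → ℝ} (hH : ConvexOn ℝ Set.univ H)
    (hb : ∀ i, 1 ≤ i → i ≤ k → 0 < b i)
    (hsort : ∀ i j, 1 ≤ i → i < j → j ≤ k → a j / b j < a i / b i) (a0 b0 : ℝ) :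
    ∃ j ≤ k, ∀ w : ℕ → ℝ, (∀ i, 1 ≤ i → i ≤ k → w i ∈ Set.Icc (0 : ℝ) 1) →
      a0 + ∑ i ∈ Icc 1 k, a i * w i + H (b0 + ∑ i ∈ Icc 1 k, b i * w i)
        ≤ a0 + ∑ i ∈ Icc 1 j, a i + H (b0 + ∑ i ∈ Icc 1 j, b i) := by
  obtain ⟨j₀, hj₀, hmax⟩ := exists_max_image (Iic k)
    (fun m => a0 + ∑ i ∈ Icc 1 m, a i + H (b0 + ∑ i ∈ Icc 1 m, b i)) nonempty_Iic
  refine ⟨j₀, mem_Iic.1 hj₀, fun w hw => ?_⟩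
  obtain ⟨j, hjk, hj⟩ := exists_rightside_vertex_ge hH hb hsort a0 b0 hw
  exact hj.trans (hmax j (mem_Iic.2 hjk))

end Zonogon

theorem worst_case_under_optimal_control_at_rightside_vertex_general
    (k : ℕ) (a b : ℕ → ℝ) (a0 b0 : ℝ)
    (hb : ∀ i, 1 ≤ i → i ≤ k → 0 < b i)
    (hsort : ∀ i j, 1 ≤ i → i < j → j ≤ k → a j / b j < a i / b i)
    (g : ℝ → ℝ) (hg : ConvexOn ℝ Set.univ g)
    (c : ℝ) (L U : ℝ) (hLU : L ≤ U)
    (ystar : ℝ) (hy : ∀ y : ℝ, c * ystar + g ystar ≤ c * y + g y) :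
    ∃ j ≤ k, ∀ w : ℕ → ℝ, (∀ i, 1 ≤ i → i ≤ k → w i ∈ Set.Icc (0 : ℝ) 1) →
      (a0 + ∑ i ∈ Finset.Icc 1 k, a i * w i)
          + c * min U (max L (ystar - (b0 + ∑ i ∈ Finset.Icc 1 k, b i * w i)))
          + g ((b0 + ∑ i ∈ Finset.Icc 1 k, b i * w i)
              + min U (max L (ystar - (b0 + ∑ i ∈ Finset.Icc 1 k, b i * w i))))
        ≤ (a0 + ∑ i ∈ Finset.Icc 1 j, a i)
          + c * min U (max L (ystar - (b0 + ∑ i ∈ Finset.Icc 1 j, b i)))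
          + g ((b0 + ∑ i ∈ Finset.Icc 1 j, b i)
              + min U (max L (ystar - (b0 + ∑ i ∈ Finset.Icc 1 j, b i)))) := by
  obtain ⟨j, hjk, hj⟩ :=
    exists_rightside_vertex_forall_ge (convexOn_optimal_cost hg hLU hy) hb hsort a0 b0
  exact ⟨j, hjk, fun w hw => by simpa only [add_assoc] using hj w hw⟩

/-- the worst case of the one-step cost
`θ₁ + c·u*(θ₂) + g(θ₂ + u*(θ₂))` under the optimal clamped control law
`u*(x) = min U (max L (y* - x))` is attained at one of the right-side vertices
`P 0, …, P k` of the zonogon. -/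
theorem worst_case_under_optimal_control_at_rightside_vertex
    (k : ℕ) (a b : ℕ → ℝ) (a0 b0 : ℝ)
    (hb : ∀ i, 1 ≤ i → i ≤ k → 0 < b i)
    (hsort : ∀ i j, 1 ≤ i → i < j → j ≤ k → a j / b j < a i / b i)
    (g : ℝ → ℝ) (hg : ConvexOn ℝ Set.univ g)
    (c : ℝ) (hc : 0 ≤ c) (L U : ℝ) (hLU : L ≤ U)
    (ystar : ℝ) (hy : ∀ y : ℝ, c * ystar + g ystar ≤ c * y + g y) :
    ∃ j ≤ k, ∀ w : ℕ → ℝ, (∀ i, 1 ≤ i → i ≤ k → w i ∈ Set.Icc (0 : ℝ) 1) →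
      (a0 + ∑ i ∈ Finset.Icc 1 k, a i * w i)
          + c * min U (max L (ystar - (b0 + ∑ i ∈ Finset.Icc 1 k, b i * w i)))
          + g ((b0 + ∑ i ∈ Finset.Icc 1 k, b i * w i)
              + min U (max L (ystar - (b0 + ∑ i ∈ Finset.Icc 1 k, b i * w i))))
        ≤ (a0 + ∑ i ∈ Finset.Icc 1 j, a i)
          + c * min U (max L (ystar - (b0 + ∑ i ∈ Finset.Icc 1 j, b i)))
          + g ((b0 + ∑ i ∈ Finset.Icc 1 j, b i)
              + min U (max L (ystar - (b0 + ∑ i ∈ Finset.Icc 1 j, b i)))) :=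
  worst_case_under_optimal_control_at_rightside_vertex_general k a b a0 b0 hb hsort g hg c L U hLU
    ystar hy
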